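/- Let A be a regularized ERM algorithm minimizing (1/n)∑ℓ(⟨w, φ(x_i)⟩, y_i) + (λ/2)‖w‖² over an RKHS with feature map φ satisfying k(x,x) = ‖φ(x)‖² ≤ κ², where ℓ(·, y) is convex and L-Lipschitz in its first argument. Then for neighboring datasets S, S' (differing in one point), the minimizers satisfy ‖w_S - w_{S'}‖₂ ≤ 4Lκ/(nλ). -/
import Mathlib
open scoped RealInnerProductSpace

lemma strongMin {d : ℕ} {g : EuclideanSpace ℝ (Fin d) → ℝ}
    (hg : ConvexOn ℝ Set.univ g) {lam : ℝ} (hlam : 0 < lam)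
    {w0 : EuclideanSpace ℝ (Fin d)}
    (hmin : IsMinOn (fun w => g w + lam / 2 * ‖w‖ ^ 2) Set.univ w0)
    (w : EuclideanSpace ℝ (Fin d)) :
    lam / 2 * ‖w - w0‖ ^ 2 ≤
      (g w + lam / 2 * ‖w‖ ^ 2) - (g w0 + lam / 2 * ‖w0‖ ^ 2) := by
  have key : ∀ t : ℝ, 0 < t → t ≤ 1 →
      0 ≤ (g w - g w0 + lam * ⟪w0, w - w0⟫) + lam / 2 * t * ‖w - w0‖ ^ 2 := by
    intro t ht ht1
    have hmem := isMinOn_iff.mp hmin ((1 - t) • w0 + t • w) (Set.mem_univ _)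
    have hgc := hg.2 (Set.mem_univ w0) (Set.mem_univ w)
      (by linarith : (0:ℝ) ≤ 1 - t) ht.le (by ring)
    have h1 : (1 - t) • w0 + t • w = w0 + t • (w - w0) := by
      rw [smul_sub, sub_smul, one_smul]; abel
    have hnorm : ‖(1 - t) • w0 + t • w‖ ^ 2
        = ‖w0‖ ^ 2 + 2 * (t * ⟪w0, w - w0⟫) + t ^ 2 * ‖w - w0‖ ^ 2 := by
      rw [h1, norm_add_sq_real, real_inner_smul_right, norm_smul,
        Real.norm_eq_abs, mul_pow, sq_abs]
    simp only [smul_eq_mul] at hmem hgc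
    rw [hnorm] at hmem
    have h2 : 0 ≤ t * ((g w - g w0 + lam * ⟪w0, w - w0⟫) + lam / 2 * t * ‖w - w0‖ ^ 2) := by
      nlinarith [hmem, hgc]
    by_contra hA
    push_neg at hA
    have := mul_neg_of_pos_of_neg ht hA
    linarith
  have hA : 0 ≤ g w - g w0 + lam * ⟪w0, w - w0⟫ := by
    by_contra hA
    push_neg at hA
    set A := g w - g w0 + lam * ⟪w0, w - w0⟫ with hAdef
    set c := lam / 2 * ‖w - w0‖ ^ 2 with hcdef
    have hc : 0 ≤ c := by positivity
    set t : ℝ := min 1 (-A / (2 * (c + 1))) with htdef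
    have htpos : 0 < t := by
      apply lt_min one_pos
      apply div_pos (by linarith) (by linarith)
    have ht1 : t ≤ 1 := min_le_left _ _
    have ht2 : t ≤ -A / (2 * (c + 1)) := min_le_right _ _
    have hk := key t htpos ht1
    have htc : t * c ≤ -A / 2 := by
      have h3 : t * (c + 1) ≤ -A / (2 * (c + 1)) * (c + 1) :=
        mul_le_mul_of_nonneg_right ht2 (by linarith)
      have h4 : -A / (2 * (c + 1)) * (c + 1) = -A / 2 := by
        field_simp
      nlinarith [htpos]
    have : lam / 2 * t * ‖w - w0‖ ^ 2 = t * c := by rw [hcdef]; ring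
    rw [this] at hk
    linarith
  have hw : ‖w‖ ^ 2 = ‖w0‖ ^ 2 + 2 * ⟪w0, w - w0⟫ + ‖w - w0‖ ^ 2 := by
    have : w = w0 + (w - w0) := by abel
    nth_rewrite 1 [this]
    rw [norm_add_sq_real]
  nlinarith [hA, hw]


lemma ermConvex {d n : ℕ} {X Y : Type*} (φ : X → EuclideanSpace ℝ (Fin d))
    (ℓ : ℝ → Y → ℝ) (hconv : ∀ y : Y, ConvexOn ℝ Set.univ (fun a => ℓ a y))
    (c : ℝ) (hc : 0 ≤ c) (S : Fin n → X × Y) :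
    ConvexOn ℝ Set.univ (fun w : EuclideanSpace ℝ (Fin d) =>
      c * ∑ i, ℓ ⟪w, φ (S i).1⟫ (S i).2) := by
  refine ⟨convex_univ, ?_⟩
  intro x _ y _ a b ha hb hab
  simp only [smul_eq_mul]
  have hterm : ∀ i : Fin n,
      ℓ ⟪a • x + b • y, φ (S i).1⟫ (S i).2
        ≤ a * ℓ ⟪x, φ (S i).1⟫ (S i).2 + b * ℓ ⟪y, φ (S i).1⟫ (S i).2 := by
    intro i
    have hin : ⟪a • x + b • y, φ (S i).1⟫
        = a * ⟪x, φ (S i).1⟫ + b * ⟪y, φ (S i).1⟫ := by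
      rw [inner_add_left, real_inner_smul_left, real_inner_smul_left]
    rw [hin]
    have := (hconv (S i).2).2 (Set.mem_univ (⟪x, φ (S i).1⟫ : ℝ))
      (Set.mem_univ (⟪y, φ (S i).1⟫ : ℝ)) ha hb hab
    simpa using this
  have hsum : ∑ i, ℓ ⟪a • x + b • y, φ (S i).1⟫ (S i).2
      ≤ a * ∑ i, ℓ ⟪x, φ (S i).1⟫ (S i).2 + b * ∑ i, ℓ ⟪y, φ (S i).1⟫ (S i).2 := by
    rw [Finset.mul_sum, Finset.mul_sum, ← Finset.sum_add_distrib]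
    exact Finset.sum_le_sum fun i _ => hterm i
  calc c * ∑ i, ℓ ⟪a • x + b • y, φ (S i).1⟫ (S i).2
      ≤ c * (a * ∑ i, ℓ ⟪x, φ (S i).1⟫ (S i).2 + b * ∑ i, ℓ ⟪y, φ (S i).1⟫ (S i).2) :=
        mul_le_mul_of_nonneg_left hsum hc
    _ = a * (c * ∑ i, ℓ ⟪x, φ (S i).1⟫ (S i).2) + b * (c * ∑ i, ℓ ⟪y, φ (S i).1⟫ (S i).2) := by
        ring

/-- Sensitivity of regularized ERM (Theorem 1): for L-Lipschitz convex losses over an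
RKHS with feature map bounded by κ, neighboring datasets yield minimizers at
distance at most 4Lκ/(nλ). -/
theorem regularized_erm_sensitivity
    {d n : ℕ} (hn : 0 < n) {X Y : Type*}
    (φ : X → EuclideanSpace ℝ (Fin d)) (κ L lam : ℝ)
    (hκ : 0 ≤ κ) (hL : 0 ≤ L) (hlam : 0 < lam)
    (hbound : ∀ x : X, ‖φ x‖ ≤ κ)
    (ℓ : ℝ → Y → ℝ)
    (hconv : ∀ y : Y, ConvexOn ℝ Set.univ (fun a => ℓ a y))
    (hLip : ∀ (a a' : ℝ) (y : Y), |ℓ a y - ℓ a' y| ≤ L * |a - a'|)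
    (S S' : Fin n → X × Y)
    -- neighboring datasets: they differ in at most one entry
    (hneighbor : ∃ j : Fin n, ∀ i : Fin n, i ≠ j → S i = S' i)
    (wS wS' : EuclideanSpace ℝ (Fin d))
    (hwS : IsMinOn (fun w : EuclideanSpace ℝ (Fin d) =>
      (1 / (n : ℝ)) * ∑ i, ℓ ⟪w, φ (S i).1⟫ (S i).2 + lam / 2 * ‖w‖ ^ 2)
      Set.univ wS)
    (hwS' : IsMinOn (fun w : EuclideanSpace ℝ (Fin d) =>
      (1 / (n : ℝ)) * ∑ i, ℓ ⟪w, φ (S' i).1⟫ (S' i).2 + lam / 2 * ‖w‖ ^ 2)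
      Set.univ wS') :
    ‖wS - wS'‖ ≤ 4 * L * κ / (n * lam) := by
  obtain ⟨j, hj⟩ := hneighbor
  have hN : (0:ℝ) < n := by exact_mod_cast hn
  have hcn : (0:ℝ) ≤ 1 / n := by positivity
  set gS : EuclideanSpace ℝ (Fin d) → ℝ :=
    fun w => (1 / (n : ℝ)) * ∑ i, ℓ ⟪w, φ (S i).1⟫ (S i).2 with hgS
  set gS' : EuclideanSpace ℝ (Fin d) → ℝ :=
    fun w => (1 / (n : ℝ)) * ∑ i, ℓ ⟪w, φ (S' i).1⟫ (S' i).2 with hgS'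
  have h1 := strongMin (ermConvex φ ℓ hconv (1 / n) hcn S) hlam hwS wS'
  have h2 := strongMin (ermConvex φ ℓ hconv (1 / n) hcn S') hlam hwS' wS
  rw [norm_sub_rev wS' wS] at h1
  -- the sums differ only in entry j
  have hdiff : ∀ w : EuclideanSpace ℝ (Fin d),
      (∑ i, ℓ ⟪w, φ (S i).1⟫ (S i).2) - (∑ i, ℓ ⟪w, φ (S' i).1⟫ (S' i).2)
        = ℓ ⟪w, φ (S j).1⟫ (S j).2 - ℓ ⟪w, φ (S' j).1⟫ (S' j).2 := by
    intro w
    rw [← Finset.sum_sub_distrib]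
    rw [Finset.sum_eq_single j]
    · intro i _ hij
      rw [hj i hij, sub_self]
    · intro h; exact absurd (Finset.mem_univ j) h
  -- Lipschitz + Cauchy-Schwarz bound for one term
  have hterm : ∀ (w w' : EuclideanSpace ℝ (Fin d)) (x : X) (y : Y),
      ℓ ⟪w, φ x⟫ y - ℓ ⟪w', φ x⟫ y ≤ L * κ * ‖wS - wS'‖ →
        True := fun _ _ _ _ _ => trivial
  have hbnd : ∀ (x : X) (y : Y),
      ℓ ⟪wS', φ x⟫ y - ℓ ⟪wS, φ x⟫ y ≤ L * (κ * ‖wS - wS'‖) ∧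
      ℓ ⟪wS, φ x⟫ y - ℓ ⟪wS', φ x⟫ y ≤ L * (κ * ‖wS - wS'‖) := by
    intro x y
    have hcs : |⟪wS, φ x⟫ - ⟪wS', φ x⟫| ≤ κ * ‖wS - wS'‖ := by
      rw [← inner_sub_left]
      calc |⟪wS - wS', φ x⟫| ≤ ‖wS - wS'‖ * ‖φ x‖ := abs_real_inner_le_norm _ _
        _ ≤ κ * ‖wS - wS'‖ := by
            rw [mul_comm]
            exact mul_le_mul_of_nonneg_right (hbound x) (norm_nonneg _)
    constructor
    · calc ℓ ⟪wS', φ x⟫ y - ℓ ⟪wS, φ x⟫ y ≤ |ℓ ⟪wS', φ x⟫ y - ℓ ⟪wS, φ x⟫ y| :=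
            le_abs_self _
        _ ≤ L * |⟪wS', φ x⟫ - ⟪wS, φ x⟫| := hLip _ _ _
        _ = L * |⟪wS, φ x⟫ - ⟪wS', φ x⟫| := by rw [abs_sub_comm]
        _ ≤ L * (κ * ‖wS - wS'‖) := mul_le_mul_of_nonneg_left hcs hL
    · calc ℓ ⟪wS, φ x⟫ y - ℓ ⟪wS', φ x⟫ y ≤ |ℓ ⟪wS, φ x⟫ y - ℓ ⟪wS', φ x⟫ y| :=
            le_abs_self _
        _ ≤ L * |⟪wS, φ x⟫ - ⟪wS', φ x⟫| := hLip _ _ _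
        _ ≤ L * (κ * ‖wS - wS'‖) := mul_le_mul_of_nonneg_left hcs hL
  -- combine
  have hmain : lam * ‖wS - wS'‖ ^ 2 ≤ (1 / (n : ℝ)) * (2 * (L * (κ * ‖wS - wS'‖))) := by
    have hsum1 := hdiff wS'
    have hsum2 := hdiff wS
    have hb1 := (hbnd (S j).1 (S j).2).1
    have hb2 := (hbnd (S' j).1 (S' j).2).2
    have hcombine : lam * ‖wS - wS'‖ ^ 2 ≤
        (1 / (n : ℝ)) * ((ℓ ⟪wS', φ (S j).1⟫ (S j).2 - ℓ ⟪wS, φ (S j).1⟫ (S j).2)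
          + (ℓ ⟪wS, φ (S' j).1⟫ (S' j).2 - ℓ ⟪wS', φ (S' j).1⟫ (S' j).2)) := by
      have e : (1 / (n : ℝ)) * ((ℓ ⟪wS', φ (S j).1⟫ (S j).2 - ℓ ⟪wS, φ (S j).1⟫ (S j).2)
          + (ℓ ⟪wS, φ (S' j).1⟫ (S' j).2 - ℓ ⟪wS', φ (S' j).1⟫ (S' j).2))
          = (gS wS' - gS wS) + (gS' wS - gS' wS') := by
        simp only [hgS, hgS']
        rw [show (ℓ ⟪wS', φ (S j).1⟫ (S j).2 - ℓ ⟪wS, φ (S j).1⟫ (S j).2)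
          + (ℓ ⟪wS, φ (S' j).1⟫ (S' j).2 - ℓ ⟪wS', φ (S' j).1⟫ (S' j).2)
          = ((∑ i, ℓ ⟪wS', φ (S i).1⟫ (S i).2) - (∑ i, ℓ ⟪wS', φ (S' i).1⟫ (S' i).2))
          - ((∑ i, ℓ ⟪wS, φ (S i).1⟫ (S i).2) - (∑ i, ℓ ⟪wS, φ (S' i).1⟫ (S' i).2)) from by
            rw [hsum1, hsum2]; ring]
        ring
      rw [e]
      simp only [hgS, hgS'] at h1 h2 ⊢
      nlinarith [h1, h2]
    have hble : (1 / (n : ℝ)) * ((ℓ ⟪wS', φ (S j).1⟫ (S j).2 - ℓ ⟪wS, φ (S j).1⟫ (S j).2)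
          + (ℓ ⟪wS, φ (S' j).1⟫ (S' j).2 - ℓ ⟪wS', φ (S' j).1⟫ (S' j).2))
        ≤ (1 / (n : ℝ)) * (2 * (L * (κ * ‖wS - wS'‖))) := by
      apply mul_le_mul_of_nonneg_left _ hcn
      linarith [hb1, hb2]
    linarith
  -- conclude
  rcases eq_or_lt_of_le (norm_nonneg (wS - wS')) with hz | hz
  · rw [← hz]; positivity
  · rw [le_div_iff₀ (by positivity : (0:ℝ) < (n:ℝ) * lam)]
    have h4 : (n:ℝ) * (lam * ‖wS - wS'‖ ^ 2) ≤ 2 * (L * (κ * ‖wS - wS'‖)) := by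
      have := mul_le_mul_of_nonneg_left hmain (le_of_lt hN)
      calc (n:ℝ) * (lam * ‖wS - wS'‖ ^ 2)
          ≤ (n:ℝ) * ((1 / (n : ℝ)) * (2 * (L * (κ * ‖wS - wS'‖)))) := this
        _ = 2 * (L * (κ * ‖wS - wS'‖)) := by field_simp
    nlinarith [h4, hz, mul_nonneg hL hκ]
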